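/- arXiv:2512.21323 — 3 statements merged into one kernel-verified Lean document; each statement's English description precedes it below -/
import Mathlib

section
/- (Expressivity of PTP.) Let P be an autoregressive model over Fin V, let s be a context, and let Φ : [0,1)^n → (Fin V)^n map auxiliaries (u_1, …, u_n) to the tokens (t_1, …, t_n) of the PTP recursion. Then the pushforward of the n-fold product of Lebesgue measure on [0,1) under Φ equals the autoregressive joint distribution: for every sequence (a_1, …, a_n) ∈ (Fin V)^n, the Lebesgue measure of {u ∈ [0,1)^n : Φ(u) = (a_1, …, a_n)} equals ∏_{k=1}^{n} P(a_k ∣ s ++ [a_1, …, a_{k-1}]). -/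
open MeasureTheory

def IsProbVec {V : ℕ} (p : Fin V → ℝ) : Prop :=
  (∀ j, 0 ≤ p j) ∧ ∑ j, p j = 1

def cdf {V : ℕ} (p : Fin V → ℝ) (j : Fin V) : ℝ :=
  ∑ l ∈ Finset.Iic j, p l

def cdfLt {V : ℕ} (p : Fin V → ℝ) (j : Fin V) : ℝ :=
  ∑ l ∈ Finset.Iio j, p l

open Classical in
noncomputable def pick {V : ℕ} [NeZero V] (p : Fin V → ℝ) (u : ℝ) : Fin V :=
  if h : (Finset.univ.filter fun j => u < cdf p j).Nonempty then
    (Finset.univ.filter fun j => u < cdf p j).min' h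
  else ⟨0, Nat.pos_of_ne_zero (NeZero.ne V)⟩

/-- Tokens generated so far by the PTP recursion: `ptpPrefix P s u k = [t_1, …, t_k]`. -/
noncomputable def ptpPrefix {V : ℕ} [NeZero V] (P : List (Fin V) → Fin V → ℝ)
    (s : List (Fin V)) (u : ℕ → ℝ) : ℕ → List (Fin V)
  | 0 => []
  | k + 1 => ptpPrefix P s u k ++ [pick (P (s ++ ptpPrefix P s u k)) (u k)]

/-- The `(k+1)`-st token of the PTP recursion (0-indexed `k`):
`t_{k+1} = Pick(u_{k+1}, P(·∣ s ++ [t_1, …, t_k]))`. -/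
noncomputable def ptpTok {V : ℕ} [NeZero V] (P : List (Fin V) → Fin V → ℝ)
    (s : List (Fin V)) (u : ℕ → ℝ) (k : ℕ) : Fin V :=
  pick (P (s ++ ptpPrefix P s u k)) (u k)

/-- The PTP map `Φ : [0,1)^n → (Fin V)^n` sending auxiliaries to the generated tokens. -/
noncomputable def ptpMap {V : ℕ} [NeZero V] (P : List (Fin V) → Fin V → ℝ)
    (s : List (Fin V)) {n : ℕ} (u : Fin n → ℝ) (k : Fin n) : Fin V :=
  ptpTok P s (fun i => if h : i < n then u ⟨i, h⟩ else 0) k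

/-- The list `[a_1, …, a_{j-1}]` of tokens strictly before position `j`. -/
def tokPrefix {V m : ℕ} (a : Fin m → Fin V) (j : Fin m) : List (Fin V) :=
  List.ofFn (fun i : Fin j.1 => a (Fin.castLE j.2.le i))

lemma cdfLt_add_self {V : ℕ} (p : Fin V → ℝ) (j : Fin V) :
    cdfLt p j + p j = cdf p j := by
  unfold cdf cdfLt
  rw [← Finset.Iio_insert, Finset.sum_insert (by simp)]
  ring

lemma cdfLt_nonneg {V : ℕ} {p : Fin V → ℝ} (h : ∀ j, 0 ≤ p j) (j : Fin V) :
    0 ≤ cdfLt p j := Finset.sum_nonneg fun i _ => h i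

lemma cdf_le_one {V : ℕ} {p : Fin V → ℝ} (hp : IsProbVec p) (j : Fin V) :
    cdf p j ≤ 1 := by
  rw [← hp.2]
  exact Finset.sum_le_sum_of_subset_of_nonneg (Finset.subset_univ _)
    (fun i _ _ => hp.1 i)

lemma cdf_le_cdfLt_of_lt {V : ℕ} {p : Fin V → ℝ} (h : ∀ j, 0 ≤ p j) {i j : Fin V}
    (hij : i < j) : cdf p i ≤ cdfLt p j := by
  apply Finset.sum_le_sum_of_subset_of_nonneg _ (fun l _ _ => h l)
  intro l hl
  simp only [Finset.mem_Iic] at hl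
  simp only [Finset.mem_Iio]
  exact lt_of_le_of_lt hl hij

lemma pick_eq_of {V : ℕ} [NeZero V] {p : Fin V → ℝ} (h : ∀ j, 0 ≤ p j) {u : ℝ}
    {j : Fin V} (hc : cdfLt p j ≤ u) (hd : u < cdf p j) : pick p u = j := by
  classical
  have hj : j ∈ Finset.univ.filter fun i => u < cdf p i := by simp [hd]
  have hne : (Finset.univ.filter fun i => u < cdf p i).Nonempty := ⟨j, hj⟩
  unfold pick
  rw [dif_pos hne]
  refine le_antisymm (Finset.min'_le _ _ hj) (Finset.le_min' _ _ _ fun i hi => ?_)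
  simp only [Finset.mem_filter] at hi
  by_contra hji
  push_neg at hji
  exact absurd hi.2 (not_lt.2 ((cdf_le_cdfLt_of_lt h hji).trans hc))

lemma pick_mem {V : ℕ} [NeZero V] {p : Fin V → ℝ} (hp : IsProbVec p) {u : ℝ}
    (hu0 : 0 ≤ u) (hu1 : u < 1) :
    cdfLt p (pick p u) ≤ u ∧ u < cdf p (pick p u) := by
  classical
  set jlast : Fin V := ⟨V - 1, by have := NeZero.pos V; omega⟩ with hjl
  have hlast : cdf p jlast = 1 := by
    rw [← hp.2]
    unfold cdf
    congr 1
    ext i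
    simp only [Finset.mem_Iic, Finset.mem_univ, iff_true]
    exact Fin.le_def.2 (by have := i.2; simp [hjl]; omega)
  have hjmem : jlast ∈ Finset.univ.filter fun i => u < cdf p i := by
    simp [hlast, hu1]
  have hne : (Finset.univ.filter fun i => u < cdf p i).Nonempty := ⟨_, hjmem⟩
  have hpick : pick p u = (Finset.univ.filter fun i => u < cdf p i).min' hne := by
    unfold pick; rw [dif_pos hne]
  constructor
  · by_cases hIio : (Finset.Iio (pick p u)).Nonempty
    · set i := (Finset.Iio (pick p u)).max' hIio with hi
      have hilt : i < pick p u := Finset.mem_Iio.1 (Finset.max'_mem _ hIio)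
      have hinot : ¬ u < cdf p i := by
        intro hlt
        have : pick p u ≤ i := by
          rw [hpick]
          exact Finset.min'_le _ _ (by simp [hlt])
        exact absurd hilt (not_lt.2 this)
      have hsub : cdfLt p (pick p u) ≤ cdf p i := by
        apply Finset.sum_le_sum_of_subset_of_nonneg _ (fun l _ _ => hp.1 l)
        intro l hl
        simp only [Finset.mem_Iio] at hl
        exact Finset.mem_Iic.2 (Finset.le_max' _ _ (Finset.mem_Iio.2 hl))
      exact hsub.trans (not_lt.1 hinot)
    · have : cdfLt p (pick p u) = 0 := by
        unfold cdfLt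
        rw [Finset.not_nonempty_iff_eq_empty.1 hIio, Finset.sum_empty]
      rw [this]; exact hu0
  · have := Finset.min'_mem _ hne
    rw [← hpick] at this
    simpa using (Finset.mem_filter.1 this).2
lemma tokPrefix_eq {V m : ℕ} (a : Fin m → Fin V) (j : Fin m) :
    tokPrefix a j = List.ofFn (fun i : Fin j.1 => a ⟨i.1, lt_of_lt_of_le i.2 j.2.le⟩) := rfl

lemma prefix_eq_of_pick {V : ℕ} [NeZero V] (P : List (Fin V) → Fin V → ℝ)
    (s : List (Fin V)) {n : ℕ} (a : Fin n → Fin V) (u : ℕ → ℝ)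
    (hpick : ∀ k : Fin n, ptpPrefix P s u k.1 = tokPrefix a k →
      pick (P (s ++ tokPrefix a k)) (u k.1) = a k) :
    ∀ k (hk : k ≤ n),
      ptpPrefix P s u k = List.ofFn (fun i : Fin k => a ⟨i.1, lt_of_lt_of_le i.2 hk⟩) := by
  intro k
  induction k with
  | zero => intro hk; simp [ptpPrefix]
  | succ k ih =>
    intro hk
    have hk' : k < n := hk
    have hIH := ih hk'.le
    have hpre : ptpPrefix P s u k = tokPrefix a ⟨k, hk'⟩ := by
      rw [hIH, tokPrefix_eq]
    have hp := hpick ⟨k, hk'⟩ hpre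
    show ptpPrefix P s u k ++ [pick (P (s ++ ptpPrefix P s u k)) (u k)] = _
    rw [hpre, hp]
    rw [List.ofFn_succ', List.concat_eq_append]
    congr 1

lemma ptpTok_eq {V : ℕ} [NeZero V] (P : List (Fin V) → Fin V → ℝ)
    (s : List (Fin V)) {n : ℕ} (a : Fin n → Fin V) (u : ℕ → ℝ)
    (hpick : ∀ k : Fin n, ptpPrefix P s u k.1 = tokPrefix a k →
      pick (P (s ++ tokPrefix a k)) (u k.1) = a k) (k : Fin n) :
    ptpTok P s u k.1 = a k := by
  have hpre : ptpPrefix P s u k.1 = tokPrefix a k := by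
    rw [prefix_eq_of_pick P s a u hpick k.1 k.2.le, tokPrefix_eq]
  unfold ptpTok
  rw [hpre]
  exact hpick k hpre

/-- **Expressivity of PTP.** The pushforward of the `n`-fold product Lebesgue measure on
`[0,1)^n` under the PTP map `Φ` equals the autoregressive joint distribution: for every target
`(a_1, …, a_n)`, the measure of `{u ∈ [0,1)^n : Φ(u) = a}` is
`∏_k P(a_k ∣ s ++ [a_1, …, a_{k-1}])`. -/
theorem ptp_pushforward {V : ℕ} [NeZero V] {n : ℕ}
    (P : List (Fin V) → Fin V → ℝ) (hP : ∀ s, IsProbVec (P s))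
    (s : List (Fin V)) (a : Fin n → Fin V) :
    volume {u : Fin n → ℝ | (∀ k, u k ∈ Set.Ico (0 : ℝ) 1) ∧ ptpMap P s u = a} =
      ENNReal.ofReal (∏ k, P (s ++ tokPrefix a k) (a k)) := by
  set c : Fin n → ℝ := fun k => cdfLt (P (s ++ tokPrefix a k)) (a k) with hc
  set d : Fin n → ℝ := fun k => cdf (P (s ++ tokPrefix a k)) (a k) with hd
  have hseteq : {u : Fin n → ℝ | (∀ k, u k ∈ Set.Ico (0 : ℝ) 1) ∧ ptpMap P s u = a}
      = Set.pi Set.univ fun k => Set.Ico (c k) (d k) := by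
    ext u
    set u' : ℕ → ℝ := fun i => if h : i < n then u ⟨i, h⟩ else 0 with hu'
    have hu'k : ∀ k : Fin n, u' k.1 = u k := by
      intro k; simp [hu']
    constructor
    · rintro ⟨h1, h2⟩
      have hpick : ∀ k : Fin n, ptpPrefix P s u' k.1 = tokPrefix a k →
          pick (P (s ++ tokPrefix a k)) (u' k.1) = a k := by
        intro k hpre
        have := congrFun h2 k
        unfold ptpMap ptpTok at this
        rw [← hu'] at this
        rw [← hpre]
        exact this
      intro k _
      have hpre : ptpPrefix P s u' k.1 = tokPrefix a k := by
        rw [prefix_eq_of_pick P s a u' hpick k.1 k.2.le, tokPrefix_eq]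
      have hpk := hpick k hpre
      rw [hu'k] at hpk
      have hm := pick_mem (hP (s ++ tokPrefix a k)) (h1 k).1 (h1 k).2
      rw [hpk] at hm
      exact ⟨hm.1, hm.2⟩
    · intro hu
      have hcd : ∀ k : Fin n, c k ≤ u k ∧ u k < d k := fun k => hu k trivial
      have h1 : ∀ k, u k ∈ Set.Ico (0 : ℝ) 1 := by
        intro k
        refine ⟨le_trans (cdfLt_nonneg (hP _).1 _) (hcd k).1,
          lt_of_lt_of_le (hcd k).2 (cdf_le_one (hP _) _)⟩
      have hpick : ∀ k : Fin n, ptpPrefix P s u' k.1 = tokPrefix a k →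
          pick (P (s ++ tokPrefix a k)) (u' k.1) = a k := by
        intro k _
        rw [hu'k]
        exact pick_eq_of (hP _).1 (hcd k).1 (hcd k).2
      refine ⟨h1, funext fun k => ?_⟩
      unfold ptpMap
      rw [← hu']
      exact ptpTok_eq P s a u' hpick k
  rw [hseteq]
  have hdc : ∀ k, d k - c k = P (s ++ tokPrefix a k) (a k) := by
    intro k
    have := cdfLt_add_self (P (s ++ tokPrefix a k)) (a k)
    simp [hc, hd, ← this]
  rw [volume_pi_pi]
  simp only [Real.volume_Ico]
  rw [← ENNReal.ofReal_prod_of_nonneg (fun k _ => by rw [hdc k]; exact (hP _).1 _)]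
  congr 1
  exact Finset.prod_congr rfl fun k _ => hdc k
end

section
/- (Conditional independence of tokens and past auxiliaries.) Let P be an autoregressive model over Fin V and let the auxiliaries U_1, …, U_n be i.i.d. uniform on [0,1), with tokens T_k = Pick(U_k, P(·∣ s ++ [T_1, …, T_{k-1}])) for a fixed context s. Then for every k, the token T_k is conditionally independent of (U_1, …, U_{k-1}) given (T_1, …, T_{k-1}). -/
open MeasureTheory

section PTPaux

open MeasureTheory

variable {V : ℕ} [NeZero V]

lemma measurable_decide_lt (c : ℝ) : Measurable fun u : ℝ => decide (u < c) := by
  apply measurable_to_countable'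
  intro y
  cases y with
  | false =>
    have : (fun u : ℝ => decide (u < c)) ⁻¹' {false} = Set.Ici c := by
      ext u; simp [not_lt]
    rw [this]; exact measurableSet_Ici
  | true =>
    have : (fun u : ℝ => decide (u < c)) ⁻¹' {true} = Set.Iio c := by
      ext u; simp
    rw [this]; exact measurableSet_Iio

lemma measurable_pick (p : Fin V → ℝ) : Measurable (pick p) := by
  classical
  have h : pick p = (fun b : Fin V → Bool =>
      if h : (Finset.univ.filter fun j => b j = true).Nonempty then
        (Finset.univ.filter fun j => b j = true).min' h
      else ⟨0, Nat.pos_of_ne_zero (NeZero.ne V)⟩) ∘ fun u j => decide (u < cdf p j) := by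
    funext u
    have he : (Finset.univ.filter fun j : Fin V => (decide (u < cdf p j)) = true)
        = Finset.univ.filter fun j => u < cdf p j := by
      apply Finset.filter_congr
      intro j _
      simp
    simp only [Function.comp_apply, pick, he]
  rw [h]
  exact (measurable_of_countable _).comp (measurable_pi_lambda _ fun j => measurable_decide_lt _)

lemma ptpPrefix_congr (P : List (Fin V) → Fin V → ℝ) (s : List (Fin V)) {u u' : ℕ → ℝ} :
    ∀ k, (∀ j < k, u j = u' j) → ptpPrefix P s u k = ptpPrefix P s u' k
  | 0, _ => rfl
  | k+1, h => by
    have ih := ptpPrefix_congr P s k fun j hj => h j (Nat.lt_succ_of_lt hj)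
    simp [ptpPrefix, ih, h k (Nat.lt_succ_self k)]

lemma ptpTok_congr (P : List (Fin V) → Fin V → ℝ) (s : List (Fin V)) {u u' : ℕ → ℝ} (k : ℕ)
    (h : ∀ j ≤ k, u j = u' j) : ptpTok P s u k = ptpTok P s u' k := by
  rw [ptpTok, ptpTok, ptpPrefix_congr P s k (fun j hj => h j hj.le), h k le_rfl]

lemma ptpPrefix_eq_map (P : List (Fin V) → Fin V → ℝ) (s : List (Fin V)) (u : ℕ → ℝ) :
    ∀ k, ptpPrefix P s u k = (List.range k).map fun i => ptpTok P s u i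
  | 0 => rfl
  | k+1 => by
    rw [List.range_succ, List.map_append, ← ptpPrefix_eq_map P s u k]
    rfl

/-- The candidate context list built from a token vector. -/
def tokList (k : ℕ) (a : Fin k → Fin V) : List (Fin V) :=
  (List.range k).map fun i =>
    if h : i < k then a ⟨i, h⟩ else ⟨0, Nat.pos_of_ne_zero (NeZero.ne V)⟩

lemma tokList_eq (P : List (Fin V) → Fin V → ℝ) (s : List (Fin V)) (u : ℕ → ℝ) (k : ℕ) :
    tokList k (fun i : Fin k => ptpTok P s u i) = ptpPrefix P s u k := by
  rw [ptpPrefix_eq_map]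
  unfold tokList
  apply List.map_congr_left
  intro i hi
  rw [List.mem_range] at hi
  simp [hi]

set_option maxHeartbeats 1000000 in
lemma measurable_ptpTok (P : List (Fin V) → Fin V → ℝ) (s : List (Fin V)) (k : ℕ) :
    Measurable fun u : ℕ → ℝ => ptpTok P s u k := by
  induction k using Nat.strong_induction_on with
  | _ k ih =>
  have hvec : Measurable fun u : ℕ → ℝ => (fun i : Fin k => ptpTok P s u i) :=
    measurable_pi_lambda _ fun i => ih i i.2
  have hrepr : (fun u : ℕ → ℝ => ptpTok P s u k) =
      (fun q : ℝ × (Fin k → Fin V) => pick (P (s ++ tokList k q.2)) q.1) ∘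
        fun u => (u k, fun i : Fin k => ptpTok P s u i) := by
    funext u
    simp only [Function.comp_apply, tokList_eq]
    rfl
  rw [hrepr]
  exact (measurable_from_prod_countable_left fun a => measurable_pick (P (s ++ tokList k a))).comp
    ((measurable_pi_apply k).prodMk hvec)

end PTPaux

open ProbabilityTheory

set_option maxHeartbeats 1000000 in
/-- **Conditional independence of tokens and past auxiliaries.** If the auxiliaries
`U_1, …, U_n` are i.i.d. uniform on `[0,1)` and `T_k = Pick(U_k, P(·∣ s ++ [T_1, …, T_{k-1}]))`,
then each token `T_k` is conditionally independent of `(U_1, …, U_{k-1})` given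
`(T_1, …, T_{k-1})` (indices are 0-based below: the token with index `k` is the `(k+1)`-st). -/
theorem token_condIndep_past_auxiliaries {V : ℕ} [NeZero V]
    {Ω : Type*} [MeasurableSpace Ω] [StandardBorelSpace Ω]
    (μ : Measure Ω) [IsProbabilityMeasure μ]
    (P : List (Fin V) → Fin V → ℝ) (hP : ∀ s, IsProbVec (P s))
    (s : List (Fin V)) (n : ℕ)
    (U : ℕ → Ω → ℝ) (hU : ∀ i, Measurable (U i))
    (hIndep : iIndepFun U μ)
    (hUnif : ∀ i, Measure.map (U i) μ = volume.restrict (Set.Ico (0 : ℝ) 1))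
    (T : ℕ → Ω → Fin V)
    (hT : ∀ k ω, T k ω = ptpTok P s (fun i => U i ω) k)
    (k : ℕ) (hk : k < n)
    (hm' : MeasurableSpace.comap (fun ω => fun i : Fin k => T i ω) inferInstance ≤
      ‹MeasurableSpace Ω›) :
    CondIndepFun (MeasurableSpace.comap (fun ω => fun i : Fin k => T i ω) inferInstance) hm'
      (T k) (fun ω => fun i : Fin k => U i ω) μ := by
  classical
  set Tvec : Ω → (Fin k → Fin V) := fun ω => fun i : Fin k => T i ω with hTvecdef
  set Uvec : Ω → (Fin k → ℝ) := fun ω => fun i : Fin k => U i ω with hUvecdef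
  -- measurability
  have hTmeas : ∀ i, Measurable (T i) := by
    intro i
    have : T i = (fun u : ℕ → ℝ => ptpTok P s u i) ∘ fun ω j => U j ω := funext fun ω => hT i ω
    rw [this]
    exact (measurable_ptpTok P s i).comp (measurable_pi_lambda _ hU)
  have hUvec_meas : Measurable Uvec := measurable_pi_lambda _ fun i => hU i
  have hTvec_meas : Measurable Tvec := measurable_pi_lambda _ fun i => hTmeas i
  -- the map G with Tvec = G ∘ Uvec
  set G : (Fin k → ℝ) → (Fin k → Fin V) := fun v i =>
    ptpTok P s (fun j => if h : j < k then v ⟨j, h⟩ else 0) i with hGdef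
  have hGmeas : Measurable G := by
    apply measurable_pi_lambda
    intro i
    apply (measurable_ptpTok P s i).comp
    apply measurable_pi_lambda
    intro j
    by_cases h : j < k
    · simpa [h] using measurable_pi_apply (⟨j, h⟩ : Fin k)
    · simpa [h] using measurable_const
  have hTvecG : ∀ ω, Tvec ω = G (Uvec ω) := by
    intro ω
    funext i
    show T i ω = ptpTok P s (fun j => if h : j < k then U j ω else 0) i
    rw [hT]
    refine ptpTok_congr P s i.1 fun j hj => ?_
    have hjk : j < k := lt_of_le_of_lt hj i.2
    simp [hjk]
  -- independence of U k from the earlier auxiliaries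
  have hInd : IndepFun (U k) Uvec μ := by
    have hdisj : Disjoint ({k} : Finset ℕ) (Finset.range k) := by
      simp [Finset.disjoint_left]
    have h0 := hIndep.indepFun_finset {k} (Finset.range k) hdisj hU
    have hphi : Measurable fun v : {x // x ∈ ({k} : Finset ℕ)} → ℝ =>
        v ⟨k, Finset.mem_singleton_self k⟩ := measurable_pi_apply _
    have hpsi : Measurable fun v : {x // x ∈ Finset.range k} → ℝ =>
        (fun i : Fin k => v ⟨i.1, Finset.mem_range.mpr i.2⟩) :=
      measurable_pi_lambda _ fun i => measurable_pi_apply _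
    exact h0.comp hphi hpsi
  have hprod : ∀ (C : Set ℝ) (D : Set (Fin k → ℝ)), MeasurableSet C → MeasurableSet D →
      μ (U k ⁻¹' C ∩ Uvec ⁻¹' D) = μ (U k ⁻¹' C) * μ (Uvec ⁻¹' D) :=
    fun C D hC hD => indepFun_iff_measure_inter_preimage_eq_mul.mp hInd C D hC hD
  -- conditional law pieces
  set pk : (Fin k → Fin V) → ℝ → Fin V := fun a x => pick (P (s ++ tokList k a)) x with hpkdef
  set hfun : Set (Fin V) → (Fin k → Fin V) → ℝ :=
    fun s' a => (μ (U k ⁻¹' (pk a ⁻¹' s'))).toReal with hhdef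
  have hCmeas : ∀ (a : Fin k → Fin V) (s' : Set (Fin V)), MeasurableSet (pk a ⁻¹' s') :=
    fun a s' => measurable_pick _ ((Set.to_countable s').measurableSet)
  have hTk_eq : ∀ (ω : Ω) (a : Fin k → Fin V), Tvec ω = a → T k ω = pk a (U k ω) := by
    intro ω a ha
    have hpre : ptpPrefix P s (fun i => U i ω) k = tokList k a := by
      rw [← tokList_eq P s (fun i => U i ω) k]
      congr 1
      funext i
      rw [← hT i.1 ω]
      exact congrFun ha i
    rw [hT]
    show pick (P (s ++ ptpPrefix P s (fun i => U i ω) k)) (U k ω) = _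
    rw [hpre]
  -- atoms
  have hAtomm' : ∀ a : Fin k → Fin V, MeasurableSet[(MeasurableSpace.comap Tvec inferInstance)] (Tvec ⁻¹' {a}) :=
    fun a => ⟨{a}, (Set.to_countable {a}).measurableSet, rfl⟩
  have hAtomMeas : ∀ a : Fin k → Fin V, MeasurableSet (Tvec ⁻¹' {a}) := fun a => hm' _ (hAtomm' a)
  -- the key per-atom measure identity
  have hmeasure : ∀ (s' : Set (Fin V)) (t : Set (Fin k → ℝ)), MeasurableSet t →
      ∀ a : Fin k → Fin V,
      μ (T k ⁻¹' s' ∩ (Uvec ⁻¹' t ∩ Tvec ⁻¹' {a})) =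
        μ (U k ⁻¹' (pk a ⁻¹' s')) * μ (Uvec ⁻¹' t ∩ Tvec ⁻¹' {a}) := by
    intro s' t ht a
    have hatom : Tvec ⁻¹' {a} = Uvec ⁻¹' (G ⁻¹' {a}) := by
      ext ω
      simp only [Set.mem_preimage, Set.mem_singleton_iff, hTvecG ω]
    have h1 : T k ⁻¹' s' ∩ (Uvec ⁻¹' t ∩ Tvec ⁻¹' {a}) =
        U k ⁻¹' (pk a ⁻¹' s') ∩ Uvec ⁻¹' (t ∩ G ⁻¹' {a}) := by
      ext ω
      simp only [Set.mem_inter_iff, Set.mem_preimage, Set.mem_singleton_iff]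
      constructor
      · rintro ⟨h1, h2, h3⟩
        refine ⟨by rw [← hTk_eq ω a h3]; exact h1, h2, ?_⟩
        rw [← hTvecG ω]; exact h3
      · rintro ⟨h1, h2, h3⟩
        have h3' : Tvec ω = a := by rw [hTvecG ω]; exact h3
        exact ⟨by rw [hTk_eq ω a h3']; exact h1, h2, h3'⟩
    rw [h1, hprod _ _ (hCmeas a s') (ht.inter (hGmeas (Set.to_countable {a}).measurableSet))]
    congr 1
    rw [Set.preimage_inter, ← hatom]
  -- key conditional expectation identity
  have key : ∀ (s' : Set (Fin V)) (t : Set (Fin k → ℝ)), MeasurableSet t →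
      (μ⟦T k ⁻¹' s' ∩ Uvec ⁻¹' t | (MeasurableSpace.comap Tvec inferInstance)⟧) =ᵐ[μ]
        fun ω => hfun s' (Tvec ω) * (μ⟦Uvec ⁻¹' t | (MeasurableSpace.comap Tvec inferInstance)⟧) ω := by
    intro s' t ht
    have hAmeas : MeasurableSet (T k ⁻¹' s' ∩ Uvec ⁻¹' t) :=
      ((hTmeas k) (Set.to_countable s').measurableSet).inter (hUvec_meas ht)
    have htmeas : MeasurableSet (Uvec ⁻¹' t) := hUvec_meas ht
    have hind_t : Integrable ((Uvec ⁻¹' t).indicator fun _ => (1 : ℝ)) μ :=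
      (integrable_const (1 : ℝ)).indicator htmeas
    have hbdd : ∀ a, ‖hfun s' a‖ ≤ 1 := by
      intro a
      rw [Real.norm_eq_abs, abs_of_nonneg ENNReal.toReal_nonneg]
      refine ENNReal.toReal_le_of_le_ofReal one_pos.le ?_
      rw [ENNReal.ofReal_one]
      exact (measure_mono (Set.subset_univ _)).trans_eq measure_univ
    have hg_int : Integrable (fun ω => hfun s' (Tvec ω) * (μ⟦Uvec ⁻¹' t | (MeasurableSpace.comap Tvec inferInstance)⟧) ω) μ := by
      refine Integrable.bdd_mul (c := 1) integrable_condExp ?_ (Filter.Eventually.of_forall fun ω => hbdd _)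
      exact ((measurable_of_countable (hfun s')).comp hTvec_meas).aestronglyMeasurable
    refine (ae_eq_condExp_of_forall_setIntegral_eq hm'
      ((integrable_const (1 : ℝ)).indicator hAmeas)
      (fun E hE hμE => hg_int.integrableOn) (fun E hE hμE => ?_) ?_).symm
    · -- set integral equality
      obtain ⟨B, -, rfl⟩ := hE
      set Bf := (Set.toFinite B).toFinset with hBfdef
      have hEdecomp : Tvec ⁻¹' B = ⋃ a ∈ Bf, Tvec ⁻¹' {a} := by
        ext ω
        simp only [Set.mem_preimage, Set.mem_iUnion, Set.mem_singleton_iff,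
          Set.Finite.mem_toFinset, hBfdef, exists_prop]
        constructor
        · intro h; exact ⟨Tvec ω, h, rfl⟩
        · rintro ⟨a, ha, h⟩; rw [h]; exact ha
      have hdisj : Set.Pairwise (↑Bf) (Function.onFun Disjoint fun a => Tvec ⁻¹' {a}) := by
        intro a _ b _ hab
        simp only [Function.onFun]
        apply Set.disjoint_left.mpr
        intro ω haω hbω
        simp only [Set.mem_preimage, Set.mem_singleton_iff] at haω hbω
        exact hab (by rw [← haω, hbω])
      rw [hEdecomp,
        integral_biUnion_finset Bf (fun a _ => hAtomMeas a) hdisj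
          (fun a _ => hg_int.integrableOn),
        integral_biUnion_finset Bf (fun a _ => hAtomMeas a) hdisj
          (fun a _ => ((integrable_const (1 : ℝ)).indicator hAmeas).integrableOn)]
      refine Finset.sum_congr rfl fun a _ => ?_
      have hstep1 : ∫ ω in Tvec ⁻¹' {a}, hfun s' (Tvec ω) * (μ⟦Uvec ⁻¹' t | (MeasurableSpace.comap Tvec inferInstance)⟧) ω ∂μ
          = hfun s' a * ∫ ω in Tvec ⁻¹' {a}, (μ⟦Uvec ⁻¹' t | (MeasurableSpace.comap Tvec inferInstance)⟧) ω ∂μ := by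
        rw [← integral_const_mul]
        refine setIntegral_congr_fun (hAtomMeas a) fun ω hω => ?_
        simp only [Set.mem_preimage, Set.mem_singleton_iff] at hω
        rw [hω]
      rw [hstep1, setIntegral_condExp hm' hind_t (hAtomm' a),
        setIntegral_indicator htmeas, setIntegral_const,
        setIntegral_indicator hAmeas, setIntegral_const]
      have hset : Tvec ⁻¹' {a} ∩ (T k ⁻¹' s' ∩ Uvec ⁻¹' t)
          = T k ⁻¹' s' ∩ (Uvec ⁻¹' t ∩ Tvec ⁻¹' {a}) := by
        ext ω
        simp only [Set.mem_inter_iff]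
        tauto
      have hset2 : Tvec ⁻¹' {a} ∩ Uvec ⁻¹' t = Uvec ⁻¹' t ∩ Tvec ⁻¹' {a} := Set.inter_comm _ _
      rw [hset, hset2]
      simp only [measureReal_def]
      rw [hmeasure s' t ht a, ENNReal.toReal_mul]
      simp [hhdef, mul_comm, mul_assoc, mul_left_comm]
    · -- strong measurability
      refine StronglyMeasurable.aestronglyMeasurable ?_
      have h1 : StronglyMeasurable[(MeasurableSpace.comap Tvec inferInstance)] fun ω => hfun s' (Tvec ω) :=
        ((measurable_of_countable (hfun s')).comp (comap_measurable Tvec)).stronglyMeasurable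
      exact h1.mul stronglyMeasurable_condExp
  -- assemble
  rw [condIndepFun_iff_condExp_inter_preimage_eq_mul (hTmeas k) hUvec_meas]
  intro s' t hs' ht
  have h1 := key s' t ht
  have h2 := key s' Set.univ MeasurableSet.univ
  simp only [Set.preimage_univ, Set.inter_univ] at h2
  have huniv : (μ⟦(Set.univ : Set Ω) | (MeasurableSpace.comap Tvec inferInstance)⟧) =ᵐ[μ] fun _ => (1 : ℝ) := by
    have : (Set.univ : Set Ω).indicator (fun _ => (1 : ℝ)) = fun _ => (1 : ℝ) := by
      simp
    rw [this]
    exact Filter.EventuallyEq.of_eq (condExp_const (μ := μ) hm' (1 : ℝ))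
  filter_upwards [h1, h2, huniv] with ω e1 e2 e3
  rw [e1, e2, e3, mul_one]
end

section
/- (Error-corrected speculative decoding reproduces the teacher exactly.) Let Q be an autoregressive model over Fin V, fix a context s and auxiliaries u_1, …, u_n ∈ [0,1), and let t̃_1, …, t̃_n be the teacher sequence defined by t̃_k = Pick(u_k, Q(·∣ s ++ [t̃_1, …, t̃_{k-1}])). Consider the iterative procedure that, starting from the empty accepted sequence, in each round takes arbitrary draft tokens for the remaining positions, accepts the longest prefix of drafts that agree position-by-position with Pick applied to Q's conditionals along the accepted-plus-draft history with the corresponding auxiliaries, and then appends one token produced by Q via Pick (if positions remain). Then this procedure terminates after at most n rounds and its final output equals (t̃_1, …, t̃_n), independently of the draft tokens proposed in each round. -/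
open MeasureTheory

/-- The draft token at (relative) position `j` agrees with `Pick` applied to the teacher's
conditional along the accepted-plus-draft history, with the corresponding auxiliary. -/
def draftMatch {V : ℕ} [NeZero V] (Q : List (Fin V) → Fin V → ℝ) (s : List (Fin V))
    (u : ℕ → ℝ) (acc : List (Fin V)) (d : ℕ → Fin V) (j : ℕ) : Prop :=
  d j = pick (Q (s ++ acc ++ List.ofFn (fun i : Fin j => d i))) (u (acc.length + j))

/-- One round of error-corrected speculative decoding: take arbitrary drafts `d`, accept the
longest matching prefix of drafts (length `c`), and append one teacher-produced token if
positions remain. -/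
def ecStep {V : ℕ} [NeZero V] (Q : List (Fin V) → Fin V → ℝ) (s : List (Fin V))
    (u : ℕ → ℝ) (n : ℕ) (acc acc' : List (Fin V)) : Prop :=
  ∃ (d : ℕ → Fin V) (c : ℕ),
    (∀ j, j < c → draftMatch Q s u acc d j) ∧
    (acc.length + c = n ∨ (acc.length + c < n ∧ ¬ draftMatch Q s u acc d c)) ∧
    acc' = if acc.length + c < n then
        acc ++ List.ofFn (fun i : Fin c => d i) ++
          [pick (Q (s ++ acc ++ List.ofFn (fun i : Fin c => d i))) (u (acc.length + c))]
      else acc ++ List.ofFn (fun i : Fin c => d i)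


lemma ptpPrefix_length {V : ℕ} [NeZero V] (P : List (Fin V) → Fin V → ℝ)
    (s : List (Fin V)) (u : ℕ → ℝ) (k : ℕ) : (ptpPrefix P s u k).length = k := by
  induction k with
  | zero => rfl
  | succ k ih => simp [ptpPrefix, ih]

lemma ptpPrefix_eq_ofFn {V : ℕ} [NeZero V] (P : List (Fin V) → Fin V → ℝ)
    (s : List (Fin V)) (u : ℕ → ℝ) (k : ℕ) :
    ptpPrefix P s u k = List.ofFn (fun i : Fin k => ptpTok P s u i) := by
  induction k with
  | zero => rfl
  | succ k ih =>
    rw [List.ofFn_succ']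
    simp [ptpPrefix, ih, ptpTok, List.concat_eq_append, Fin.last]

lemma accept_eq {V : ℕ} [NeZero V] (Q : List (Fin V) → Fin V → ℝ)
    (s : List (Fin V)) (u : ℕ → ℝ) (m : ℕ) (d : ℕ → Fin V) (c : ℕ)
    (hm : ∀ j, j < c → draftMatch Q s u (ptpPrefix Q s u m) d j) :
    ptpPrefix Q s u m ++ List.ofFn (fun i : Fin c => d i) = ptpPrefix Q s u (m + c) := by
  induction c with
  | zero => simp
  | succ c ih =>
    have ih' := ih (fun j hj => hm j (Nat.lt_succ_of_lt hj))
    have hd := hm c (Nat.lt_succ_self c)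
    unfold draftMatch at hd
    rw [ptpPrefix_length] at hd
    rw [List.append_assoc, ih'] at hd
    rw [List.ofFn_succ']
    simp only [List.concat_eq_append, Fin.coe_castSucc, Fin.val_last]
    rw [← List.append_assoc, ih', hd, ← Nat.add_assoc]
    simp [ptpPrefix]

/-- **Error-corrected speculative decoding reproduces the teacher exactly.** Starting from the
empty accepted sequence and applying error-correction rounds with arbitrary drafts, the
procedure terminates after at most `n` rounds and its output is exactly the teacher sequence
`t̃_k = ptpTok Q s u k`, independently of the drafts proposed in each round. -/
theorem error_corrected_decoding_eq_teacher {V : ℕ} [NeZero V]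
    (Q : List (Fin V) → Fin V → ℝ) (hQ : ∀ s, IsProbVec (Q s))
    (s : List (Fin V)) (n : ℕ) (u : ℕ → ℝ) (hu : ∀ k, k < n → u k ∈ Set.Ico (0 : ℝ) 1)
    (acc : ℕ → List (Fin V)) (h0 : acc 0 = [])
    (hstep : ∀ r, ((acc r).length < n → ecStep Q s u n (acc r) (acc (r + 1))) ∧
      ((acc r).length = n → acc (r + 1) = acc r)) :
    acc n = List.ofFn (fun k : Fin n => ptpTok Q s u k) := by
  have key : ∀ r, acc r = ptpPrefix Q s u (acc r).length ∧
      min r n ≤ (acc r).length ∧ (acc r).length ≤ n := by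
    intro r
    induction r with
    | zero => simp [h0, ptpPrefix]
    | succ r ih =>
      obtain ⟨heq, hmin, hle⟩ := ih
      rcases Nat.lt_or_ge (acc r).length n with hlt | hge
      · obtain ⟨d, c, hmatch, hdisj, hacc'⟩ := (hstep r).1 hlt
        have hmatch' : ∀ j, j < c → draftMatch Q s u (ptpPrefix Q s u (acc r).length) d j := by
          intro j hj; rw [← heq]; exact hmatch j hj
        have hstar := accept_eq Q s u (acc r).length d c hmatch'
        rw [← heq] at hstar
        rcases hdisj with hEq | ⟨hlt2, _⟩
        · rw [if_neg (by omega)] at hacc'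
          rw [hacc', hstar, hEq]
          refine ⟨?_, by simp [ptpPrefix_length], by simp [ptpPrefix_length]⟩
          rw [ptpPrefix_length]
        · rw [if_pos hlt2] at hacc'
          have key2 : acc (r + 1) = ptpPrefix Q s u ((acc r).length + c + 1) := by
            rw [List.append_assoc s (acc r)] at hacc'
            rw [hstar] at hacc'
            rw [hacc']
            simp [ptpPrefix]
          refine ⟨by rw [key2, ptpPrefix_length], ?_, ?_⟩ <;>
            · rw [key2, ptpPrefix_length]; omega
      · have hn : (acc r).length = n := le_antisymm hle hge
        rw [(hstep r).2 hn]
        exact ⟨heq, by omega, hle⟩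
  obtain ⟨heq, hmin, hle⟩ := key n
  have hn : (acc n).length = n := by omega
  rw [heq, hn, ptpPrefix_eq_ofFn]
end
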